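/- arXiv:2511.12975 — 6 statements merged into one kernel-verified Lean document; each statement's English description precedes it below -/
import Mathlib

section
/- For every real number p with 1 < p ≤ 2 there exists a constant c_p > 0 such that for every real a > 0 and every real x one has |a + x|^p ≤ a^p + p·a^{p−1}·x + c_p·|x|^p. -/
/-!
The derivative of `t ↦ |t|^p` is `p · φ(t)` with `φ(t) = sign t · |t|^(p-1)`, and for
`0 < p - 1 ≤ 1` the map `φ` is `(p-1)`-Hölder with constant `2`. By the mean value theorem,
`s ↦ |a + s|^p - p φ(a) s` therefore varies by at most `2p |x|^(p-1) · |x| = 2p |x|^p` on the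
segment from `0` to `x`; for `a > 0` one has `φ(a) = a^(p-1)`.
-/

open Real

lemma Real.rpow_sub_rpow_le_rpow_sub {q u v : ℝ} (hq0 : 0 ≤ q) (hq1 : q ≤ 1) (hv : 0 ≤ v)
    (hvu : v ≤ u) : u ^ q - v ^ q ≤ (u - v) ^ q := by
  have h := rpow_add_le_add_rpow (sub_nonneg.mpr hvu) hv hq0 hq1
  rw [sub_add_cancel] at h
  linarith

noncomputable def signedRpow (q t : ℝ) : ℝ := Real.sign t * |t| ^ q

namespace signedRpow

variable {q : ℝ}

lemma of_nonneg (hq : q ≠ 0) {t : ℝ} (ht : 0 ≤ t) : signedRpow q t = t ^ q := by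
  rcases ht.eq_or_lt with rfl | ht
  · simp [signedRpow, zero_rpow hq]
  · simp [signedRpow, sign_of_pos ht, abs_of_pos ht]

lemma neg (t : ℝ) : signedRpow q (-t) = -signedRpow q t := by
  simp [signedRpow, sign_neg]

lemma of_nonpos (hq : q ≠ 0) {t : ℝ} (ht : t ≤ 0) : signedRpow q t = -(-t) ^ q := by
  rw [← of_nonneg hq (neg_nonneg.mpr ht), neg, neg_neg]

lemma monotone (hq : 0 < q) : Monotone (signedRpow q) := by
  intro u v huv
  rcases le_total 0 u with hu | hu
  · rw [of_nonneg hq.ne' hu, of_nonneg hq.ne' (hu.trans huv)]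
    exact rpow_le_rpow hu huv hq.le
  rcases le_total 0 v with hv | hv
  · rw [of_nonpos hq.ne' hu, of_nonneg hq.ne' hv]
    linarith [rpow_nonneg (neg_nonneg.mpr hu) q, rpow_nonneg hv q]
  · rw [of_nonpos hq.ne' hu, of_nonpos hq.ne' hv]
    linarith [rpow_le_rpow (neg_nonneg.mpr hv) (neg_le_neg huv) hq.le]

lemma abs_sub_le (hq0 : 0 < q) (hq1 : q ≤ 1) (u v : ℝ) :
    |signedRpow q u - signedRpow q v| ≤ 2 * |u - v| ^ q := by
  wlog hvu : v ≤ u generalizing u v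
  · rw [abs_sub_comm, abs_sub_comm u]
    exact this v u (le_of_not_ge hvu)
  rw [abs_of_nonneg (sub_nonneg.mpr (monotone hq0 hvu)), abs_of_nonneg (sub_nonneg.mpr hvu)]
  have hgap : 0 ≤ (u - v) ^ q := rpow_nonneg (sub_nonneg.mpr hvu) q
  rcases le_total 0 v with hv | hv
  · rw [of_nonneg hq0.ne' hv, of_nonneg hq0.ne' (hv.trans hvu)]
    linarith [rpow_sub_rpow_le_rpow_sub hq0.le hq1 hv hvu]
  rcases le_total 0 u with hu | hu
  · rw [of_nonneg hq0.ne' hu, of_nonpos hq0.ne' hv]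
    linarith [rpow_le_rpow hu (by linarith : u ≤ u - v) hq0.le,
      rpow_le_rpow (neg_nonneg.mpr hv) (by linarith : -v ≤ u - v) hq0.le]
  · rw [of_nonpos hq0.ne' hu, of_nonpos hq0.ne' hv]
    have h := rpow_sub_rpow_le_rpow_sub hq0.le hq1 (neg_nonneg.mpr hu) (neg_le_neg hvu)
    rw [neg_sub_neg] at h
    linarith

end signedRpow

lemma hasDerivAt_abs_rpow_signedRpow {p : ℝ} (hp : 1 < p) (t : ℝ) :
    HasDerivAt (fun s : ℝ => |s| ^ p) (p * signedRpow (p - 1) t) t := by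
  convert hasDerivAt_abs_rpow t hp using 1
  rw [mul_assoc]
  congr 1
  rcases lt_trichotomy t 0 with ht | rfl | ht
  · rw [signedRpow, sign_of_neg ht, abs_of_neg ht, show p - 1 = p - 2 + 1 by ring,
      rpow_add_one (neg_pos.mpr ht).ne']
    ring
  · simp [signedRpow]
  · rw [signedRpow, sign_of_pos ht, abs_of_pos ht, show p - 1 = p - 2 + 1 by ring,
      rpow_add_one ht.ne', one_mul]

lemma abs_abs_add_rpow_sub_le {p : ℝ} (hp1 : 1 < p) (hp2 : p ≤ 2) (a x : ℝ) :
    |(|a + x| ^ p - |a| ^ p - p * signedRpow (p - 1) a * x)| ≤ 2 * p * |x| ^ p := by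
  set g : ℝ → ℝ := fun s => |a + s| ^ p - p * signedRpow (p - 1) a * s
  have hg : ∀ s, HasDerivAt g (p * signedRpow (p - 1) (a + s) - p * signedRpow (p - 1) a) s :=
    fun s => (((hasDerivAt_abs_rpow_signedRpow hp1 (a + s)).comp s
      ((hasDerivAt_id s).const_add a)).congr_deriv (mul_one _)).sub
      ((hasDerivAt_id s).const_mul _ |>.congr_deriv (mul_one _))
  have hbound : ∀ s ∈ Metric.closedBall (0 : ℝ) |x|,
      ‖p * signedRpow (p - 1) (a + s) - p * signedRpow (p - 1) a‖ ≤ 2 * p * |x| ^ (p - 1) := by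
    intro s hs
    rw [Metric.mem_closedBall, dist_zero_right, norm_eq_abs] at hs
    rw [← mul_sub, norm_mul, norm_eq_abs, norm_eq_abs, abs_of_pos (by linarith : 0 < p)]
    have hholder := signedRpow.abs_sub_le (q := p - 1) (by linarith) (by linarith) (a + s) a
    rw [add_sub_cancel_left] at hholder
    have hs' := rpow_le_rpow (abs_nonneg s) hs (by linarith : 0 ≤ p - 1)
    nlinarith
  have hmvt := (convex_closedBall (0 : ℝ) |x|).norm_image_sub_le_of_norm_hasDerivWithin_le
    (fun s _ => (hg s).hasDerivWithinAt) hbound (Metric.mem_closedBall_self (abs_nonneg x))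
    (by simp : x ∈ Metric.closedBall 0 |x|)
  have hpow : |x| ^ (p - 1) * |x| = |x| ^ p := by
    rw [← rpow_add_one' (abs_nonneg x) (by linarith), sub_add_cancel]
  calc |(|a + x| ^ p - |a| ^ p - p * signedRpow (p - 1) a * x)| = ‖g x - g 0‖ := by
        simp only [g, add_zero, mul_zero, sub_zero, norm_eq_abs]
        congr 1
        ring
    _ ≤ 2 * p * |x| ^ (p - 1) * ‖x - 0‖ := hmvt
    _ = 2 * p * |x| ^ p := by rw [sub_zero, norm_eq_abs, mul_assoc, hpow]

/-- For every real `p` with `1 < p ≤ 2` there exists `c_p > 0` such that for every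
`a > 0` and every real `x`, `|a + x|^p ≤ a^p + p·a^(p-1)·x + c_p·|x|^p`. -/
theorem rpow_add_le_of_one_lt (p : ℝ) (hp1 : 1 < p) (hp2 : p ≤ 2) :
    ∃ c : ℝ, 0 < c ∧ ∀ a x : ℝ, 0 < a →
      |a + x| ^ p ≤ a ^ p + p * a ^ (p - 1) * x + c * |x| ^ p := by
  refine ⟨2 * p, by linarith, fun a x ha => ?_⟩
  have h := (le_abs_self _).trans (abs_abs_add_rpow_sub_le hp1 hp2 a x)
  rw [abs_of_pos ha, signedRpow.of_nonneg (by linarith) ha.le] at h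
  linarith
end

section
/- For every real number p with 1 < p ≤ 2 and every b > 0 there exists a constant c_{b,p} > 0, depending only on p and b, such that for every real a > 0 and every real x with a + x ≥ 0 one has (a + x)^p − b·(a + x)^{p−1} ≤ a^p + p·a^{p−1}·x − (b/2)·a^{p−1} + c_{b,p}·(|x|^p + 1). -/
open Real Set

private lemma aux_rpow_subadd {u v q : ℝ} (hu : 0 ≤ u) (hv : 0 ≤ v) (hq0 : 0 ≤ q)
    (hq1 : q ≤ 1) : (u + v) ^ q ≤ u ^ q + v ^ q := by
  have h := NNReal.rpow_add_le_add_rpow u.toNNReal v.toNNReal hq0 hq1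
  have h2 := NNReal.coe_le_coe.mpr h
  push_cast [NNReal.coe_rpow] at h2
  rwa [Real.coe_toNNReal u hu, Real.coe_toNNReal v hv] at h2

private lemma aux1 {p : ℝ} (hp1 : 1 < p) (hp2 : p ≤ 2) {a t : ℝ} (ha : 0 ≤ a) (ht : 0 ≤ t) :
    (a + t) ^ p ≤ a ^ p + p * a ^ (p - 1) * t + t ^ p := by
  set g : ℝ → ℝ := fun t => a ^ p + p * a ^ (p - 1) * t + t ^ p - (a + t) ^ p with hg
  have hmono : MonotoneOn g (Ici 0) := by
    have hderiv : ∀ x : ℝ, 0 < x → HasDerivAt g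
        (p * a ^ (p - 1) + p * x ^ (p - 1) - p * (a + x) ^ (p - 1) * 1) x := by
      intro x hx
      have h1 : HasDerivAt (fun t : ℝ => t ^ p) (p * x ^ (p - 1)) x :=
        Real.hasDerivAt_rpow_const (Or.inl hx.ne')
      have h2 : HasDerivAt (fun t : ℝ => (a + t) ^ p) (p * (a + x) ^ (p - 1) * 1) x :=
        (Real.hasDerivAt_rpow_const (Or.inl (by positivity : (0:ℝ) < a + x).ne')).comp x
          ((hasDerivAt_id x).const_add a)
      exact (((hasDerivAt_const x (a ^ p)).add
        ((hasDerivAt_id x).const_mul (p * a ^ (p - 1)))).add h1).sub h2 |>.congr_deriv (by ring)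
    refine monotoneOn_of_deriv_nonneg (convex_Ici 0) ?_ ?_ ?_
    · exact (by fun_prop (disch := positivity) : Continuous fun t : ℝ =>
        a ^ p + p * a ^ (p - 1) * t + t ^ p - (a + t) ^ p).continuousOn |>.congr fun x _ => rfl
    · intro x hx
      rw [interior_Ici] at hx
      exact (hderiv x hx).differentiableAt.differentiableWithinAt
    · intro x hx
      rw [interior_Ici] at hx
      rw [(hderiv x hx).deriv]
      have hsub : (a + x) ^ (p - 1) ≤ a ^ (p - 1) + x ^ (p - 1) :=
        aux_rpow_subadd ha hx.le (by linarith) (by linarith)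
      nlinarith [mul_le_mul_of_nonneg_left hsub (by linarith : (0:ℝ) ≤ p)]
  have h0 : g 0 ≤ g t := hmono self_mem_Ici ht ht
  have hpne : p ≠ 0 := by positivity
  have : g 0 = 0 := by simp [hg, Real.zero_rpow hpne]
  simp only [hg] at h0 this
  linarith [h0, this]

private lemma aux2 {p : ℝ} (hp1 : 1 < p) (hp2 : p ≤ 2) {a s : ℝ} (hs0 : 0 ≤ s) (hsa : s ≤ a) :
    (a - s) ^ p + p * a ^ (p - 1) * s ≤ a ^ p + s ^ p := by
  have ha : 0 ≤ a := le_trans hs0 hsa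
  set g : ℝ → ℝ := fun s => a ^ p + s ^ p - (a - s) ^ p - p * a ^ (p - 1) * s with hg
  have hmono : MonotoneOn g (Icc 0 a) := by
    have hderiv : ∀ x : ℝ, x ∈ Ioo (0:ℝ) a → HasDerivAt g
        (p * x ^ (p - 1) - p * (a - x) ^ (p - 1) * (-1) - p * a ^ (p - 1)) x := by
      intro x hx
      have h1 : HasDerivAt (fun t : ℝ => t ^ p) (p * x ^ (p - 1)) x :=
        Real.hasDerivAt_rpow_const (Or.inl hx.1.ne')
      have h2 : HasDerivAt (fun t : ℝ => (a - t) ^ p) (p * (a - x) ^ (p - 1) * (-1)) x :=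
        (Real.hasDerivAt_rpow_const (Or.inl (by linarith [hx.2] : (0:ℝ) < a - x).ne')).comp x
          (((hasDerivAt_id x).neg).const_add a |>.congr_deriv (by ring))
      exact ((((hasDerivAt_const x (a ^ p)).add h1).sub h2).sub
        ((hasDerivAt_id x).const_mul (p * a ^ (p - 1)))).congr_deriv (by ring)
    refine monotoneOn_of_deriv_nonneg (convex_Icc 0 a) ?_ ?_ ?_
    · exact (by fun_prop (disch := positivity) : Continuous fun t : ℝ =>
        a ^ p + t ^ p - (a - t) ^ p - p * a ^ (p - 1) * t).continuousOn
    · intro x hx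
      rw [interior_Icc] at hx
      exact (hderiv x hx).differentiableAt.differentiableWithinAt
    · intro x hx
      rw [interior_Icc] at hx
      rw [(hderiv x hx).deriv]
      have hsub : a ^ (p - 1) ≤ x ^ (p - 1) + (a - x) ^ (p - 1) := by
        have h := aux_rpow_subadd (q := p - 1) hx.1.le (by linarith [hx.2] : (0:ℝ) ≤ a - x)
          (by linarith) (by linarith)
        have heq : x + (a - x) = a := by ring
        rwa [heq] at h
      nlinarith [mul_le_mul_of_nonneg_left hsub (by linarith : (0:ℝ) ≤ p)]
  have h0 : g 0 ≤ g s := hmono (left_mem_Icc.mpr ha) ⟨hs0, hsa⟩ hs0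
  have hpne : p ≠ 0 := by positivity
  have hzero : g 0 = 0 := by simp [hg, Real.zero_rpow hpne]
  simp only [hg] at h0 hzero
  linarith [h0, hzero]

/-- For every real `p` with `1 < p ≤ 2` and every `b > 0` there exists `c_{b,p} > 0`
such that for every `a > 0` and every real `x` with `a + x ≥ 0`,
`(a + x)^p − b·(a + x)^(p−1) ≤ a^p + p·a^(p−1)·x − (b/2)·a^(p−1) + c_{b,p}·(|x|^p + 1)`. -/
theorem rpow_add_sub_le_of_one_lt (p b : ℝ) (hp1 : 1 < p) (hp2 : p ≤ 2) (hb : 0 < b) :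
    ∃ c : ℝ, 0 < c ∧ ∀ a x : ℝ, 0 < a → 0 ≤ a + x →
      (a + x) ^ p - b * (a + x) ^ (p - 1)
        ≤ a ^ p + p * a ^ (p - 1) * x - (b / 2) * a ^ (p - 1) + c * (|x| ^ p + 1) := by
  refine ⟨b / 2 + 1, by positivity, fun a x ha hax => ?_⟩
  have hp0 : (0:ℝ) < p - 1 := by linarith
  -- Taylor-type bound
  have h1 : (a + x) ^ p ≤ a ^ p + p * a ^ (p - 1) * x + |x| ^ p := by
    rcases le_or_gt 0 x with hx | hx
    · have := aux1 hp1 hp2 ha.le hx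
      rwa [abs_of_nonneg hx]
    · have hsa : -x ≤ a := by linarith
      have := aux2 hp1 hp2 (by linarith : (0:ℝ) ≤ -x) hsa
      rw [abs_of_neg hx]
      have heq : a - -x = a + x := by ring
      rw [heq] at this
      nlinarith [this]
  -- subadditivity for the b-term
  have h2 : a ^ (p - 1) ≤ (a + x) ^ (p - 1) + |x| ^ (p - 1) := by
    have hle : a ≤ (a + x) + |x| := by
      have := neg_le_abs x; linarith
    calc a ^ (p - 1) ≤ ((a + x) + |x|) ^ (p - 1) :=
          Real.rpow_le_rpow ha.le hle (by linarith)
      _ ≤ (a + x) ^ (p - 1) + |x| ^ (p - 1) :=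
          aux_rpow_subadd hax (abs_nonneg x) (by linarith) (by linarith)
  have h3 : |x| ^ (p - 1) ≤ |x| ^ p + 1 := by
    rcases le_total (|x|) 1 with hx1 | hx1
    · have : |x| ^ (p - 1) ≤ 1 := Real.rpow_le_one (abs_nonneg x) hx1 (by linarith)
      have hxp : (0:ℝ) ≤ |x| ^ p := Real.rpow_nonneg (abs_nonneg x) p
      linarith
    · have : |x| ^ (p - 1) ≤ |x| ^ p :=
        Real.rpow_le_rpow_of_exponent_le hx1 (by linarith)
      linarith
  have h4 : (0:ℝ) ≤ (a + x) ^ (p - 1) := Real.rpow_nonneg hax _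
  nlinarith [mul_le_mul_of_nonneg_left h2 (by positivity : (0:ℝ) ≤ b / 2),
    mul_le_mul_of_nonneg_left h3 (by positivity : (0:ℝ) ≤ b / 2),
    mul_nonneg hb.le h4, Real.rpow_nonneg (abs_nonneg x) p]
end

section
/- Let α > 0 satisfy α·μ₂(k) ≤ μ₁(k) for every k ∈ M, and set U(y) := 1 + s + αx + p for y = (s,x,p). Then there exist q₀ ∈ (1, 2) and α₀ > 0 such that for every q ∈ (0, q₀] there is a constant C_q > 0 with (L U^q)(y,k) = q·U(y)^{q−1}·(F₁(y,k) + α·F₂(y,k) + F₃(y,k)) + (q(q−1)/2)·U(y)^{q−2}·(σ₁(k)²s² + α²σ₂(k)²x² + σ₃(k)²p²) ≤ C_q − q·α₀·U(y)^q for all y = (s,x,p) with s, x, p ≥ 0 and all k ∈ M. -/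
lemma myrpow_sub_one_le (u q R : ℝ) (hu : 1 ≤ u) (hq2 : q ≤ 2) (hR : 1 ≤ R) :
    u ^ (q - 1) ≤ u ^ q / R + R := by
  have hu0 : 0 < u := lt_of_lt_of_le one_pos hu
  have hR0 : 0 < R := lt_of_lt_of_le one_pos hR
  rcases le_total u R with h | h
  · have h1 : u ^ (q - 1) ≤ u ^ (1 : ℝ) := Real.rpow_le_rpow_of_exponent_le hu (by linarith)
    rw [Real.rpow_one] at h1
    have h3 : 0 ≤ u ^ q / R := by positivity
    linarith
  · have hsplit : u ^ (q - 1) * u = u ^ q := by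
      nth_rewrite 2 [← Real.rpow_one u]
      rw [← Real.rpow_add hu0]; ring_nf
    have h1 : u ^ (q - 1) ≤ u ^ q / R := by
      rw [le_div_iff₀ hR0, ← hsplit]
      have := mul_le_mul_of_nonneg_left h (le_of_lt (Real.rpow_pos_of_pos hu0 (q-1)))
      linarith
    linarith

set_option maxHeartbeats 2000000 in
/-- Lyapunov estimate for `U^q`, `U(y) = 1 + s + αx + p`: there exist `q₀ ∈ (1,2)` and
`α₀ > 0` such that for every `q ∈ (0, q₀]` there is `C_q > 0` with
`(L U^q)(y,k) ≤ C_q − q·α₀·U(y)^q` on the nonnegative octant. -/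
theorem flocculation_Uq_lyapunov
    (m₀ : ℕ) (D μ₁ μ₂ h₂ h₃ σ₁ σ₂ σ₃ : Fin m₀ → ℝ) (S₀ P₀ : ℝ)
    (hD : ∀ k, 0 < D k) (hμ₁ : ∀ k, 0 < μ₁ k) (hμ₂ : ∀ k, 0 < μ₂ k)
    (hh₂ : ∀ k, 0 < h₂ k) (hh₃ : ∀ k, 0 < h₃ k)
    (hσ₁ : ∀ k, 0 < σ₁ k) (hσ₂ : ∀ k, 0 < σ₂ k) (hσ₃ : ∀ k, 0 < σ₃ k)
    (hS₀ : 0 < S₀) (hP₀ : 0 < P₀)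
    (α : ℝ) (hα : 0 < α) (hαμ : ∀ k, α * μ₂ k ≤ μ₁ k) :
    ∃ q₀ : ℝ, 1 < q₀ ∧ q₀ < 2 ∧ ∃ α₀ : ℝ, 0 < α₀ ∧
      ∀ q : ℝ, 0 < q → q ≤ q₀ → ∃ C : ℝ, 0 < C ∧
        ∀ k : Fin m₀, ∀ s x p : ℝ, 0 ≤ s → 0 ≤ x → 0 ≤ p →
          q * (1 + s + α * x + p) ^ (q - 1) *
              ((D k * (S₀ - s) - μ₁ k * s * x)
                + α * (μ₂ k * s * x - D k * x - h₂ k * x * p)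
                + (D k * (P₀ - p) - h₃ k * x * p))
            + (q * (q - 1) / 2) * (1 + s + α * x + p) ^ (q - 2) *
              ((σ₁ k) ^ 2 * s ^ 2 + α ^ 2 * (σ₂ k) ^ 2 * x ^ 2 + (σ₃ k) ^ 2 * p ^ 2)
          ≤ C - q * α₀ * (1 + s + α * x + p) ^ q := by
  rcases Nat.eq_zero_or_pos m₀ with hm | hm
  · subst hm
    exact ⟨3/2, by norm_num, by norm_num, 1, one_pos,
      fun q hq hq' => ⟨1, one_pos, fun k => k.elim0⟩⟩
  have hne : (Finset.univ : Finset (Fin m₀)).Nonempty := ⟨⟨0, hm⟩, Finset.mem_univ _⟩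
  set Dm : ℝ := Finset.univ.inf' hne D with hDm_def
  have hDm0 : 0 < Dm := by
    rw [hDm_def, Finset.lt_inf'_iff]; exact fun k _ => hD k
  have hDmle : ∀ k, Dm ≤ D k := by
    intro k; rw [hDm_def]; exact Finset.inf'_le _ (Finset.mem_univ k)
  set σM : ℝ := Finset.univ.sup' hne (fun k => max (max ((σ₁ k)^2) ((σ₂ k)^2)) ((σ₃ k)^2))
    with hσM_def
  have hσMk : ∀ k, max (max ((σ₁ k)^2) ((σ₂ k)^2)) ((σ₃ k)^2) ≤ σM := by
    intro k; rw [hσM_def]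
    exact Finset.le_sup' (fun k => max (max ((σ₁ k)^2) ((σ₂ k)^2)) ((σ₃ k)^2)) (Finset.mem_univ k)
  have hσM1 : ∀ k, (σ₁ k)^2 ≤ σM := fun k =>
    le_trans (le_trans (le_max_left ((σ₁ k)^2) ((σ₂ k)^2)) (le_max_left _ ((σ₃ k)^2))) (hσMk k)
  have hσM2 : ∀ k, (σ₂ k)^2 ≤ σM := fun k =>
    le_trans (le_trans (le_max_right ((σ₁ k)^2) ((σ₂ k)^2)) (le_max_left _ ((σ₃ k)^2))) (hσMk k)
  have hσM3 : ∀ k, (σ₃ k)^2 ≤ σM := fun k =>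
    le_trans (le_max_right (max ((σ₁ k)^2) ((σ₂ k)^2)) ((σ₃ k)^2)) (hσMk k)
  have hσM0 : 0 ≤ σM := le_trans (sq_nonneg _) (hσM1 ⟨0, hm⟩)
  set A : ℝ := Finset.univ.sup' hne (fun k => D k * (S₀ + P₀ + 1)) with hA_def
  have hAk : ∀ k, D k * (S₀ + P₀ + 1) ≤ A := by
    intro k; rw [hA_def]
    exact Finset.le_sup' (fun k => D k * (S₀ + P₀ + 1)) (Finset.mem_univ k)
  have hA0 : 0 < A :=
    lt_of_lt_of_le (by have := hD ⟨0, hm⟩; nlinarith) (hAk ⟨0, hm⟩)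
  refine ⟨min (3/2) (1 + Dm / (σM + 1)), ?_, ?_, Dm/4, by positivity, ?_⟩
  · apply lt_min (by norm_num); nlinarith [div_pos hDm0 (by linarith : (0:ℝ) < σM + 1)]
  · exact lt_of_le_of_lt (min_le_left _ _) (by norm_num)
  intro q hq hq'
  have hq32 : q ≤ 3/2 := le_trans hq' (min_le_left _ _)
  have hq2 : q ≤ 2 := by linarith
  have hqσ : (q - 1) * σM ≤ Dm := by
    have h1 : q ≤ 1 + Dm / (σM + 1) := le_trans hq' (min_le_right _ _)
    have hpos : (0:ℝ) < σM + 1 := by linarith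
    have h2 : (q - 1) * (σM + 1) ≤ Dm := by
      have h3 := mul_le_mul_of_nonneg_right (by linarith : q - 1 ≤ Dm / (σM + 1)) hpos.le
      rwa [div_mul_cancel₀ _ (ne_of_gt hpos)] at h3
    rcases le_or_gt q 1 with h | h
    · have : (q - 1) * σM ≤ 0 := mul_nonpos_of_nonpos_of_nonneg (by linarith) hσM0
      linarith
    · nlinarith
  set R : ℝ := max 1 (4 * A / Dm) with hR_def
  have hR1 : (1:ℝ) ≤ R := le_max_left _ _
  have hR0 : 0 < R := lt_of_lt_of_le one_pos hR1
  have hAR : A / R ≤ Dm / 4 := by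
    rw [div_le_div_iff₀ hR0 (by norm_num)]
    have : 4 * A / Dm ≤ R := le_max_right _ _
    calc A * 4 = (4 * A / Dm) * Dm := by
          rw [div_mul_cancel₀ _ (ne_of_gt hDm0)]; ring
    _ ≤ R * Dm := mul_le_mul_of_nonneg_right this hDm0.le
    _ = Dm * R := by ring
  refine ⟨3/2 * A * R + 1, by positivity, ?_⟩
  intro k s x p hs hx hp
  set U : ℝ := 1 + s + α * x + p with hU_def
  have hU1 : (1:ℝ) ≤ U := by rw [hU_def]; nlinarith
  have hU0 : (0:ℝ) < U := lt_of_lt_of_le one_pos hU1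
  have hUq : (0:ℝ) < U ^ q := Real.rpow_pos_of_pos hU0 q
  have hUq1 : (0:ℝ) < U ^ (q-1) := Real.rpow_pos_of_pos hU0 (q-1)
  have hUq2 : (0:ℝ) < U ^ (q-2) := Real.rpow_pos_of_pos hU0 (q-2)
  have hmul1 : U ^ (q-1) * U = U ^ q := by
    nth_rewrite 2 [← Real.rpow_one U]
    rw [← Real.rpow_add hU0]; ring_nf
  have hmul2 : U ^ (q-2) * U^2 = U ^ q := by
    rw [← Real.rpow_natCast U 2, ← Real.rpow_add hU0]; norm_num
  -- drift bound
  have hdrift : (D k * (S₀ - s) - μ₁ k * s * x)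
                + α * (μ₂ k * s * x - D k * x - h₂ k * x * p)
                + (D k * (P₀ - p) - h₃ k * x * p) ≤ D k * (S₀ + P₀ + 1) - D k * U := by
    rw [hU_def]
    nlinarith [mul_nonneg (mul_nonneg hs hx) (sub_nonneg.2 (hαμ k)),
      mul_nonneg (mul_nonneg hx hp) (le_of_lt (hh₃ k)),
      mul_nonneg (mul_nonneg (mul_nonneg hα.le hx) hp) (le_of_lt (hh₂ k)),
      hD k]
  -- first term bound
  have hT1 : q * U ^ (q-1) *
      ((D k * (S₀ - s) - μ₁ k * s * x)
        + α * (μ₂ k * s * x - D k * x - h₂ k * x * p)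
        + (D k * (P₀ - p) - h₃ k * x * p))
      ≤ q * A * U ^ (q-1) - q * D k * U ^ q := by
    have step1 : q * U ^ (q-1) *
        ((D k * (S₀ - s) - μ₁ k * s * x)
          + α * (μ₂ k * s * x - D k * x - h₂ k * x * p)
          + (D k * (P₀ - p) - h₃ k * x * p))
        ≤ q * U ^ (q-1) * (D k * (S₀ + P₀ + 1) - D k * U) :=
      mul_le_mul_of_nonneg_left hdrift (by positivity)
    have step2 : q * U ^ (q-1) * (D k * (S₀ + P₀ + 1) - D k * U)
        = q * (D k * (S₀ + P₀ + 1)) * U ^ (q-1) - q * D k * (U ^ (q-1) * U) := by ring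
    rw [step2, hmul1] at step1
    have step3 : q * (D k * (S₀ + P₀ + 1)) * U ^ (q-1) ≤ q * A * U ^ (q-1) := by
      apply mul_le_mul_of_nonneg_right _ hUq1.le
      exact mul_le_mul_of_nonneg_left (hAk k) hq.le
    linarith
  -- second term bound
  have hsum : s^2 + α^2 * x^2 + p^2 ≤ (1 + s + α * x + p)^2 := by
    nlinarith [mul_nonneg hs (mul_nonneg hα.le hx), mul_nonneg hs hp,
      mul_nonneg (mul_nonneg hα.le hx) hp, mul_nonneg hα.le hx, hs, hx, hp]
  have hQσ : (σ₁ k)^2 * s^2 + α^2 * (σ₂ k)^2 * x^2 + (σ₃ k)^2 * p^2 ≤ σM * U^2 := by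
    rw [hU_def]
    have h1 : (σ₁ k)^2 * s^2 ≤ σM * s^2 := mul_le_mul_of_nonneg_right (hσM1 k) (sq_nonneg s)
    have h2 : α^2 * (σ₂ k)^2 * x^2 ≤ α^2 * σM * x^2 :=
      mul_le_mul_of_nonneg_right (mul_le_mul_of_nonneg_left (hσM2 k) (sq_nonneg α)) (sq_nonneg x)
    have h3 : (σ₃ k)^2 * p^2 ≤ σM * p^2 := mul_le_mul_of_nonneg_right (hσM3 k) (sq_nonneg p)
    have h4 := mul_le_mul_of_nonneg_left hsum hσM0
    nlinarith [h1, h2, h3, h4]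
  have hT2 : (q * (q - 1) / 2) * U ^ (q-2) *
      ((σ₁ k)^2 * s^2 + α^2 * (σ₂ k)^2 * x^2 + (σ₃ k)^2 * p^2)
      ≤ q * (Dm / 2) * U ^ q := by
    rcases le_or_gt q 1 with h | h
    · have hc : q * (q - 1) / 2 ≤ 0 := by nlinarith
      have hQ0 : 0 ≤ (σ₁ k)^2 * s^2 + α^2 * (σ₂ k)^2 * x^2 + (σ₃ k)^2 * p^2 := by positivity
      have : (q * (q - 1) / 2) * U ^ (q-2) *
          ((σ₁ k)^2 * s^2 + α^2 * (σ₂ k)^2 * x^2 + (σ₃ k)^2 * p^2) ≤ 0 := by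
        apply mul_nonpos_of_nonpos_of_nonneg _ hQ0
        exact mul_nonpos_of_nonpos_of_nonneg hc hUq2.le
      have hpos : 0 ≤ q * (Dm / 2) * U ^ q :=
        (mul_pos (mul_pos hq (by linarith)) hUq).le
      linarith
    · have step1 : (q * (q - 1) / 2) * U ^ (q-2) *
          ((σ₁ k)^2 * s^2 + α^2 * (σ₂ k)^2 * x^2 + (σ₃ k)^2 * p^2)
          ≤ (q * (q - 1) / 2) * U ^ (q-2) * (σM * U^2) := by
        apply mul_le_mul_of_nonneg_left hQσ
        exact mul_nonneg (by nlinarith : (0:ℝ) ≤ q * (q - 1) / 2) hUq2.le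
      have step2 : (q * (q - 1) / 2) * U ^ (q-2) * (σM * U^2)
          = (q / 2) * ((q-1) * σM) * (U ^ (q-2) * U^2) := by ring
      rw [step2, hmul2] at step1
      have step3 : (q / 2) * ((q-1) * σM) * U ^ q ≤ (q / 2) * Dm * U ^ q := by
        apply mul_le_mul_of_nonneg_right _ hUq.le
        exact mul_le_mul_of_nonneg_left hqσ (by positivity)
      calc (q * (q - 1) / 2) * U ^ (q-2) *
          ((σ₁ k)^2 * s^2 + α^2 * (σ₂ k)^2 * x^2 + (σ₃ k)^2 * p^2)
          ≤ (q / 2) * Dm * U ^ q := le_trans step1 step3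
        _ = q * (Dm / 2) * U ^ q := by ring
  -- combine using the rpow lemma
  have hpow : U ^ (q-1) ≤ U ^ q / R + R := myrpow_sub_one_le U q R hU1 hq2 hR1
  have hAterm : q * A * U ^ (q-1) ≤ q * (Dm/4) * U ^ q + 3/2 * A * R := by
    have h1 : q * A * U ^ (q-1) ≤ q * A * (U ^ q / R + R) :=
      mul_le_mul_of_nonneg_left hpow (by positivity)
    have h2 : q * A * (U ^ q / R + R) = q * (A / R) * U ^ q + q * A * R := by
      field_simp
    have h3 : q * (A / R) * U ^ q ≤ q * (Dm/4) * U ^ q := by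
      apply mul_le_mul_of_nonneg_right _ hUq.le
      exact mul_le_mul_of_nonneg_left hAR hq.le
    have h4 : q * A * R ≤ 3/2 * A * R :=
      mul_le_mul_of_nonneg_right (mul_le_mul_of_nonneg_right hq32 hA0.le) hR0.le
    linarith [h1, h3, h4, h2.le, h2.ge]
  have hfinal : q * (Dm/4) * U ^ q + q * (Dm/2) * U ^ q - q * D k * U ^ q
      ≤ - (q * (Dm/4) * U ^ q) := by
    have : q * (Dm/4 + Dm/2 + Dm/4 - D k) * U ^ q ≤ 0 := by
      apply mul_nonpos_of_nonpos_of_nonneg _ hUq.le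
      apply mul_nonpos_of_nonneg_of_nonpos hq.le
      have := hDmle k; linarith
    nlinarith
  linarith [hT1, hT2, hAterm, hfinal]
end

section
/- Let α > 0 satisfy α·μ₂(k) ≤ μ₁(k) for every k ∈ M, and set U(y) := 1 + s + αx + p for y = (s,x,p). Then there exists a constant K̄ > 0 such that (L U²)(y,k) = 2·U(y)·(F₁(y,k) + α·F₂(y,k) + F₃(y,k)) + (σ₁(k)²s² + α²σ₂(k)²x² + σ₃(k)²p²) ≤ K̄·U(y)² for all y = (s,x,p) with s, x, p ≥ 0 and all k ∈ M. -/
set_option maxHeartbeats 1000000 in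
/-- Lyapunov estimate for `U²`, `U(y) = 1 + s + αx + p`: there exists `K̄ > 0` with
`(L U²)(y,k) ≤ K̄·U(y)²` on the nonnegative octant. -/
theorem flocculation_Usq_growth
    (m₀ : ℕ) (D μ₁ μ₂ h₂ h₃ σ₁ σ₂ σ₃ : Fin m₀ → ℝ) (S₀ P₀ : ℝ)
    (hD : ∀ k, 0 < D k) (hμ₁ : ∀ k, 0 < μ₁ k) (hμ₂ : ∀ k, 0 < μ₂ k)
    (hh₂ : ∀ k, 0 < h₂ k) (hh₃ : ∀ k, 0 < h₃ k)
    (hσ₁ : ∀ k, 0 < σ₁ k) (hσ₂ : ∀ k, 0 < σ₂ k) (hσ₃ : ∀ k, 0 < σ₃ k)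
    (hS₀ : 0 < S₀) (hP₀ : 0 < P₀)
    (α : ℝ) (hα : 0 < α) (hαμ : ∀ k, α * μ₂ k ≤ μ₁ k) :
    ∃ K : ℝ, 0 < K ∧
      ∀ k : Fin m₀, ∀ s x p : ℝ, 0 ≤ s → 0 ≤ x → 0 ≤ p →
        2 * (1 + s + α * x + p) *
            ((D k * (S₀ - s) - μ₁ k * s * x)
              + α * (μ₂ k * s * x - D k * x - h₂ k * x * p)
              + (D k * (P₀ - p) - h₃ k * x * p))
          + ((σ₁ k) ^ 2 * s ^ 2 + α ^ 2 * (σ₂ k) ^ 2 * x ^ 2 + (σ₃ k) ^ 2 * p ^ 2)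
        ≤ K * (1 + s + α * x + p) ^ 2 := by
  set C : Fin m₀ → ℝ := fun k =>
    2 * D k * (S₀ + P₀) + (σ₁ k) ^ 2 + (σ₂ k) ^ 2 + (σ₃ k) ^ 2 with hC
  have hCpos : ∀ k, 0 < C k := by
    intro k
    have := hD k; have := hσ₁ k; have := hσ₂ k; have := hσ₃ k
    have h1 : 0 < 2 * D k * (S₀ + P₀) := by positivity
    have := sq_nonneg (σ₁ k); have := sq_nonneg (σ₂ k); have := sq_nonneg (σ₃ k)
    simp only [hC]; linarith
  refine ⟨1 + ∑ k, C k, ?_, ?_⟩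
  · have : 0 ≤ ∑ k, C k := Finset.sum_nonneg fun k _ => (hCpos k).le
    linarith
  · intro k s x p hs hx hp
    have hCk : C k ≤ 1 + ∑ j, C j := by
      have h1 : C k ≤ ∑ j, C j :=
        Finset.single_le_sum (fun j _ => (hCpos j).le) (Finset.mem_univ k)
      linarith
    set u : ℝ := 1 + s + α * x + p with hu
    have hu1 : 1 ≤ u := by nlinarith
    have hu0 : 0 ≤ u := by linarith
    have hsu : s ≤ u := by nlinarith
    have hxu : α * x ≤ u := by nlinarith
    have hpu : p ≤ u := by nlinarith
    have hstep : 2 * u *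
            ((D k * (S₀ - s) - μ₁ k * s * x)
              + α * (μ₂ k * s * x - D k * x - h₂ k * x * p)
              + (D k * (P₀ - p) - h₃ k * x * p))
          + ((σ₁ k) ^ 2 * s ^ 2 + α ^ 2 * (σ₂ k) ^ 2 * x ^ 2 + (σ₃ k) ^ 2 * p ^ 2)
        ≤ C k * u ^ 2 := by
      have hB : (D k * (S₀ - s) - μ₁ k * s * x)
              + α * (μ₂ k * s * x - D k * x - h₂ k * x * p)
              + (D k * (P₀ - p) - h₃ k * x * p) ≤ D k * (S₀ + P₀) := by
        have h1 : α * μ₂ k * (s * x) ≤ μ₁ k * (s * x) :=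
          mul_le_mul_of_nonneg_right (hαμ k) (by positivity)
        nlinarith [mul_nonneg hs (hD k).le, mul_nonneg hp (hD k).le,
          mul_nonneg (mul_nonneg hα.le (hD k).le) hx,
          mul_nonneg (mul_nonneg hα.le (hh₂ k).le) (mul_nonneg hx hp),
          mul_nonneg (hh₃ k).le (mul_nonneg hx hp)]
      have h2u : 2 * u * ((D k * (S₀ - s) - μ₁ k * s * x)
              + α * (μ₂ k * s * x - D k * x - h₂ k * x * p)
              + (D k * (P₀ - p) - h₃ k * x * p)) ≤ 2 * D k * (S₀ + P₀) * u ^ 2 := by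
        have h3 : 2 * u * ((D k * (S₀ - s) - μ₁ k * s * x)
              + α * (μ₂ k * s * x - D k * x - h₂ k * x * p)
              + (D k * (P₀ - p) - h₃ k * x * p)) ≤ 2 * u * (D k * (S₀ + P₀)) :=
          mul_le_mul_of_nonneg_left hB (by linarith)
        have h4 : 2 * u * (D k * (S₀ + P₀)) ≤ 2 * D k * (S₀ + P₀) * u ^ 2 := by
          have hd : 0 ≤ D k * (S₀ + P₀) := mul_nonneg (hD k).le (by linarith)
          have huu : u ≤ u ^ 2 := by nlinarith
          nlinarith [mul_le_mul_of_nonneg_left huu hd]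
        linarith
      have hs2 : (σ₁ k) ^ 2 * s ^ 2 ≤ (σ₁ k) ^ 2 * u ^ 2 := by
        have : s ^ 2 ≤ u ^ 2 := by nlinarith
        exact mul_le_mul_of_nonneg_left this (sq_nonneg _)
      have hx2 : α ^ 2 * (σ₂ k) ^ 2 * x ^ 2 ≤ (σ₂ k) ^ 2 * u ^ 2 := by
        have h5 : α ^ 2 * x ^ 2 ≤ u ^ 2 := by nlinarith [mul_nonneg hα.le hx]
        calc α ^ 2 * (σ₂ k) ^ 2 * x ^ 2 = (σ₂ k) ^ 2 * (α ^ 2 * x ^ 2) := by ring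
          _ ≤ (σ₂ k) ^ 2 * u ^ 2 := mul_le_mul_of_nonneg_left h5 (sq_nonneg _)
      have hp2 : (σ₃ k) ^ 2 * p ^ 2 ≤ (σ₃ k) ^ 2 * u ^ 2 := by
        have : p ^ 2 ≤ u ^ 2 := by nlinarith
        exact mul_le_mul_of_nonneg_left this (sq_nonneg _)
      have hexp : C k * u ^ 2 = 2 * D k * (S₀ + P₀) * u ^ 2 + (σ₁ k) ^ 2 * u ^ 2
          + (σ₂ k) ^ 2 * u ^ 2 + (σ₃ k) ^ 2 * u ^ 2 := by
        simp only [hC]; ring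
      linarith
    calc _ ≤ C k * u ^ 2 := hstep
      _ ≤ (1 + ∑ j, C j) * u ^ 2 := mul_le_mul_of_nonneg_right hCk (sq_nonneg u)
end

section
/- Let α > 0 satisfy α·μ₂(k) ≤ μ₁(k) for every k ∈ M, set U(y) := 1 + s + αx + p, and suppose α₀ > 0 and C > 0 are constants such that (LU)(y,k) = F₁(y,k) + α·F₂(y,k) + F₃(y,k) ≤ C − α₀·U(y) for all y with s, x, p ≥ 0 and all k ∈ M. Then there exist constants β > 0, c₁ > 0 and C₁ > 0 such that, with M₀ := 4C₁/α₀ and V(y) := s + αx + p − β·ln x + c₁, one has V(y) ≥ 0 for all y = (s,x,p) ∈ (0,∞)³, and (LV)(y,k) = F₁(y,k) + α·F₂(y,k) + F₃(y,k) − (β/x)·F₂(y,k) + β·σ₂(k)²/2 ≤ C₁·1_{{U(y) ≤ M₀}} − (α₀/4)·U(y) for all y ∈ (0,∞)³ and all k ∈ M. -/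
lemma Vnn (α β c₁ : ℝ) (hα : 0 < α) (hβ : 0 < β) (hc : β * Real.log (β / α) ≤ c₁) :
    ∀ s x p : ℝ, 0 < s → 0 < x → 0 < p →
      0 ≤ s + α * x + p - β * Real.log x + c₁ := by
  intro s x p hs hx hp
  have ha : 0 < β / α := div_pos hβ hα
  have hdec : Real.log x = Real.log (x / (β / α)) + Real.log (β / α) := by
    rw [Real.log_div (ne_of_gt hx) (ne_of_gt ha)]; ring
  have h2 : Real.log (x / (β / α)) ≤ x / (β / α) - 1 :=
    Real.log_le_sub_one_of_pos (div_pos hx ha)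
  have hxd : x / (β / α) = x * α / β := by field_simp
  rw [hxd] at hdec h2
  have h3 : β * Real.log (x * α / β) ≤ β * (x * α / β - 1) :=
    mul_le_mul_of_nonneg_left h2 hβ.le
  have h4 : β * (x * α / β - 1) = α * x - β := by field_simp
  nlinarith [hdec, h3, h4, hc, hs.le, hp.le, hβ.le]

/-- Construction of the Lyapunov function `V(y) = s + αx + p − β·ln x + c₁`: given the
drift estimate `(LU)(y,k) ≤ C − α₀·U(y)`, there exist `β, c₁, C₁ > 0` such that `V ≥ 0`
on `(0,∞)³` and `(LV)(y,k) ≤ C₁·1_{U(y) ≤ 4C₁/α₀} − (α₀/4)·U(y)` on `(0,∞)³`. -/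
theorem flocculation_V_lyapunov
    (m₀ : ℕ) (D μ₁ μ₂ h₂ h₃ σ₁ σ₂ σ₃ : Fin m₀ → ℝ) (S₀ P₀ : ℝ)
    (hD : ∀ k, 0 < D k) (hμ₁ : ∀ k, 0 < μ₁ k) (hμ₂ : ∀ k, 0 < μ₂ k)
    (hh₂ : ∀ k, 0 < h₂ k) (hh₃ : ∀ k, 0 < h₃ k)
    (hσ₁ : ∀ k, 0 < σ₁ k) (hσ₂ : ∀ k, 0 < σ₂ k) (hσ₃ : ∀ k, 0 < σ₃ k)
    (hS₀ : 0 < S₀) (hP₀ : 0 < P₀)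
    (α : ℝ) (hα : 0 < α) (hαμ : ∀ k, α * μ₂ k ≤ μ₁ k)
    (α₀ C : ℝ) (hα₀ : 0 < α₀) (hC : 0 < C)
    (hLU : ∀ k : Fin m₀, ∀ s x p : ℝ, 0 ≤ s → 0 ≤ x → 0 ≤ p →
      (D k * (S₀ - s) - μ₁ k * s * x)
        + α * (μ₂ k * s * x - D k * x - h₂ k * x * p)
        + (D k * (P₀ - p) - h₃ k * x * p)
      ≤ C - α₀ * (1 + s + α * x + p)) :
    ∃ β c₁ C₁ : ℝ, 0 < β ∧ 0 < c₁ ∧ 0 < C₁ ∧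
      (∀ s x p : ℝ, 0 < s → 0 < x → 0 < p →
        0 ≤ s + α * x + p - β * Real.log x + c₁) ∧
      (∀ k : Fin m₀, ∀ s x p : ℝ, 0 < s → 0 < x → 0 < p →
        ((D k * (S₀ - s) - μ₁ k * s * x)
            + α * (μ₂ k * s * x - D k * x - h₂ k * x * p)
            + (D k * (P₀ - p) - h₃ k * x * p))
          - (β / x) * (μ₂ k * s * x - D k * x - h₂ k * x * p)
          + β * (σ₂ k) ^ 2 / 2
        ≤ (if 1 + s + α * x + p ≤ 4 * C₁ / α₀ then C₁ else 0)
            - (α₀ / 4) * (1 + s + α * x + p)) := by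
  rcases Nat.eq_zero_or_pos m₀ with hm | hm
  · subst hm
    refine ⟨α, 1 + α * |Real.log (α / α)|, C, hα, by positivity, hC, ?_, fun k => k.elim0⟩
    apply Vnn _ _ _ hα hα
    nlinarith [abs_nonneg (Real.log (α / α)), le_abs_self (Real.log (α / α)), hα.le]
  · haveI : NeZero m₀ := ⟨hm.ne'⟩
    have hne : (Finset.univ : Finset (Fin m₀)).Nonempty := Finset.univ_nonempty
    set β : ℝ := Finset.univ.inf' hne (fun k => α₀ / (2 * h₂ k)) with hβdef
    have hβ : 0 < β := by
      rw [hβdef, Finset.lt_inf'_iff]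
      intro k _
      have := hh₂ k
      positivity
    have hβh : ∀ k, β * h₂ k ≤ α₀ / 2 := by
      intro k
      have h1 : β ≤ α₀ / (2 * h₂ k) := Finset.inf'_le _ (Finset.mem_univ k)
      have h2k := hh₂ k
      calc β * h₂ k ≤ α₀ / (2 * h₂ k) * h₂ k := by
            exact mul_le_mul_of_nonneg_right h1 (hh₂ k).le
        _ = α₀ / 2 := by field_simp
    set K : ℝ := Finset.univ.sup' hne (fun k => β * D k + β * (σ₂ k) ^ 2 / 2) with hKdef
    have hK : ∀ k, β * D k + β * (σ₂ k) ^ 2 / 2 ≤ K := fun k => by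
      rw [hKdef]
      exact Finset.le_sup' (fun k => β * D k + β * (σ₂ k) ^ 2 / 2) (Finset.mem_univ k)
    have hK0 : 0 ≤ K := by
      obtain ⟨k⟩ := (inferInstance : Nonempty (Fin m₀))
      have := hK k
      nlinarith [hD k, hσ₂ k, sq_nonneg (σ₂ k), hβ]
    refine ⟨β, 1 + β * |Real.log (β / α)|, C + K, hβ, by positivity, by linarith, ?_, ?_⟩
    · apply Vnn _ _ _ hα hβ
      nlinarith [abs_nonneg (Real.log (β / α)), le_abs_self (Real.log (β / α)), hβ.le]
    · intro k s x p hs hx hp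
      have hU := hLU k s x p hs.le hx.le hp.le
      have hdiv : (β / x) * (μ₂ k * s * x - D k * x - h₂ k * x * p)
          = β * μ₂ k * s - β * D k - β * h₂ k * p := by
        field_simp
      rw [hdiv]
      have hkey : ((D k * (S₀ - s) - μ₁ k * s * x)
            + α * (μ₂ k * s * x - D k * x - h₂ k * x * p)
            + (D k * (P₀ - p) - h₃ k * x * p))
          - (β * μ₂ k * s - β * D k - β * h₂ k * p)
          + β * (σ₂ k) ^ 2 / 2
          ≤ (C + K) - (α₀ / 2) * (1 + s + α * x + p) := by
        have h1 : β * h₂ k * p ≤ (α₀ / 2) * p :=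
          mul_le_mul_of_nonneg_right (hβh k) hp.le
        have h2 : 0 ≤ β * μ₂ k * s := by
          have := hμ₂ k
          positivity
        have h3 := hK k
        have h4 : (0:ℝ) ≤ α₀ * s := mul_nonneg hα₀.le hs.le
        have h5 : (0:ℝ) ≤ α₀ * (α * x) := mul_nonneg hα₀.le (mul_nonneg hα.le hx.le)
        nlinarith [hU, h1, h2, h3, h4, h5]
      refine le_trans hkey ?_
      by_cases hcase : 1 + s + α * x + p ≤ 4 * (C + K) / α₀
      · rw [if_pos hcase]
        have hU1 : (0:ℝ) ≤ 1 + s + α * x + p := by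
          nlinarith [mul_pos hα hx]
        have h6 : (0:ℝ) ≤ α₀ * (1 + s + α * x + p) := mul_nonneg hα₀.le hU1
        linarith
      · rw [if_neg hcase]
        push_neg at hcase
        have h5 : 4 * (C + K) < (1 + s + α * x + p) * α₀ :=
          (div_lt_iff₀ hα₀).mp hcase
        nlinarith [h5]
end

section
/- Let M = {1,…,m₀} be a finite set and for each k ∈ M let D(k), μ₁(k), μ₂(k), h₂(k), h₃(k) and σ₁(k), σ₂(k), σ₃(k), σ₄(k), σ₅(k), σ₆(k) be strictly positive reals, and let S₀, P₀ > 0. For y = (s,x,p) with s, x, p ≥ 0 set F₁(y,k) = D(k)(S₀ − s) − μ₁(k)sx, F₂(y,k) = μ₂(k)sx − D(k)x − h₂(k)xp, F₃(y,k) = D(k)(P₀ − p) − h₃(k)xp, and set g₁(y,k) = (σ₁(k) + σ₄(k)s)s, g₂(y,k) = (σ₂(k) + σ₅(k)x)x, g₃(y,k) = (σ₃(k) + σ₆(k)p)p. Define Ũ(y) := (1 + s + x + p)^{1/2}. Then there exist constants c̃₁ > 0 and c̃₂ > 0 such that for all y = (s,x,p) with s, x, p ≥ 0 and all k ∈ M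 one has (1/2)·(1 + s + x + p)^{−1/2}·(F₁(y,k) + F₂(y,k) + F₃(y,k)) − (1/8)·(1 + s + x + p)^{−3/2}·(g₁(y,k)² + g₂(y,k)² + g₃(y,k)²) ≤ c̃₁ − c̃₂·Ũ(y)³. -/
set_option maxHeartbeats 1000000


lemma aux_single (A B E : ℝ) (hA : 0 ≤ A) (hB : 0 ≤ B) (hE : 0 < E) :
    ∃ c : ℝ, 0 < c ∧ ∀ v : ℝ, 0 ≤ v → A*(1+v) + B*(1+v)^3 ≤ c + E*v^4 := by
  set R : ℝ := max 1 (8*(A+B)/E) with hRdef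
  have hR1 : (1:ℝ) ≤ R := le_max_left _ _
  have hR2 : 8*(A+B)/E ≤ R := le_max_right _ _
  refine ⟨A*(1+R) + B*(1+R)^3 + 1, ?_, ?_⟩
  · nlinarith [mul_nonneg hA (by linarith : (0:ℝ) ≤ 1+R),
      mul_nonneg hB (pow_nonneg (by linarith : (0:ℝ) ≤ 1+R) 3)]
  · intro v hv
    rcases le_or_gt v R with h | h
    · have h1 : A*(1+v) ≤ A*(1+R) := by nlinarith
      have h2 : (1+v)^3 ≤ (1+R)^3 := by
        apply pow_le_pow_left₀ (by linarith) (by linarith)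
      have h3 : B*(1+v)^3 ≤ B*(1+R)^3 := mul_le_mul_of_nonneg_left h2 hB
      nlinarith [mul_nonneg hE.le (pow_nonneg hv 4)]
    · have hv1 : (1:ℝ) ≤ v := le_trans hR1 h.le
      have h8 : 8*(A+B) ≤ E*v := by
        rw [div_le_iff₀ hE] at hR2
        nlinarith
      have hcpos : 0 ≤ A*(1+R) + B*(1+R)^3 + 1 := by
        nlinarith [mul_nonneg hA (by linarith : (0:ℝ) ≤ 1+R),
          mul_nonneg hB (pow_nonneg (by linarith : (0:ℝ) ≤ 1+R) 3)]
      have key : A*(1+v) + B*(1+v)^3 ≤ E*v^4 := by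
        have hc1 : (1+v) ≤ 2*v := by linarith
        have hc3 : (1+v)^3 ≤ 8*v^3 := by
          calc (1+v)^3 ≤ (2*v)^3 := pow_le_pow_left₀ (by linarith) hc1 3
          _ = 8*v^3 := by ring
        have hv3 : v ≤ v^3 := by nlinarith
        have e1 : A*(1+v) ≤ 2*A*v^3 := by nlinarith
        have e2 : B*(1+v)^3 ≤ 8*B*v^3 := by nlinarith
        have e3 : (2*A+8*B)*v^3 ≤ E*v*v^3 := by
          have := mul_le_mul_of_nonneg_right h8 (pow_nonneg hv 3)
          nlinarith
        nlinarith
      linarith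

lemma aux_poly (D μ₁ μ₂ h₂ h₃ σ₁ σ₂ σ₃ σ₄ σ₅ σ₆ S₀ P₀ : ℝ)
    (hD : 0 < D) (hμ₁ : 0 < μ₁) (hμ₂ : 0 < μ₂) (hh₂ : 0 < h₂) (hh₃ : 0 < h₃)
    (hσ₁ : 0 < σ₁) (hσ₂ : 0 < σ₂) (hσ₃ : 0 < σ₃)
    (hσ₄ : 0 < σ₄) (hσ₅ : 0 < σ₅) (hσ₆ : 0 < σ₆)
    (hS₀ : 0 < S₀) (hP₀ : 0 < P₀) :
    ∃ c : ℝ, 0 < c ∧ ∀ s x p : ℝ, 0 ≤ s → 0 ≤ x → 0 ≤ p →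
      (1/2)*(1+s+x+p)*((D*(S₀-s) - μ₁*s*x) + (μ₂*s*x - D*x - h₂*x*p)
          + (D*(P₀-p) - h₃*x*p))
        - (1/8)*(((σ₁+σ₄*s)*s)^2 + ((σ₂+σ₅*x)*x)^2 + ((σ₃+σ₆*p)*p)^2)
        + (1+s+x+p)^3 ≤ c := by
  set m : ℝ := min (min (σ₄^2) (σ₅^2)) (σ₆^2) with hm
  have hm4 : m ≤ σ₄^2 := le_trans (min_le_left _ _) (min_le_left _ _)
  have hm5 : m ≤ σ₅^2 := le_trans (min_le_left _ _) (min_le_right _ _)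
  have hm6 : m ≤ σ₆^2 := min_le_right _ _
  have hmpos : 0 < m := lt_min (lt_min (by positivity) (by positivity)) (by positivity)
  have hE : (0:ℝ) < m/216 := by positivity
  obtain ⟨c, hc, hkey⟩ := aux_single (D*(S₀+P₀)/2) (μ₂/2 + 1) (m/216)
    (by positivity) (by positivity) hE
  clear_value m
  refine ⟨c, hc, ?_⟩
  intro s x p hs hx hp
  set v : ℝ := s + x + p with hv
  have hv0 : 0 ≤ v := by rw [hv]; linarith
  have hu : (0:ℝ) ≤ 1 + v := by linarith
  have hgoal : (1:ℝ)+s+x+p = 1+v := by rw [hv]; ring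
  clear_value v
  have hF : (D*(S₀-s) - μ₁*s*x) + (μ₂*s*x - D*x - h₂*x*p) + (D*(P₀-p) - h₃*x*p)
      ≤ D*(S₀+P₀) + μ₂*s*x := by
    have := mul_nonneg hD.le hs
    have := mul_nonneg hD.le hx
    have := mul_nonneg hD.le hp
    have := mul_nonneg (mul_nonneg hμ₁.le hs) hx
    have := mul_nonneg (mul_nonneg hh₂.le hx) hp
    have := mul_nonneg (mul_nonneg hh₃.le hx) hp
    linarith
  have hG4 : σ₄^2*s^4 ≤ ((σ₁+σ₄*s)*s)^2 := by
    nlinarith [mul_nonneg (mul_nonneg hσ₁.le hσ₄.le) (pow_nonneg hs 3), sq_nonneg (σ₁*s)]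
  have hG5 : σ₅^2*x^4 ≤ ((σ₂+σ₅*x)*x)^2 := by
    nlinarith [mul_nonneg (mul_nonneg hσ₂.le hσ₅.le) (pow_nonneg hx 3), sq_nonneg (σ₂*x)]
  have hG6 : σ₆^2*p^4 ≤ ((σ₃+σ₆*p)*p)^2 := by
    nlinarith [mul_nonneg (mul_nonneg hσ₃.le hσ₆.le) (pow_nonneg hp 3), sq_nonneg (σ₃*p)]
  have hmm : m*(s^4+x^4+p^4) ≤ σ₄^2*s^4 + σ₅^2*x^4 + σ₆^2*p^4 := by
    have a4 := mul_le_mul_of_nonneg_right hm4 (pow_nonneg hs 4)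
    have a5 := mul_le_mul_of_nonneg_right hm5 (pow_nonneg hx 4)
    have a6 := mul_le_mul_of_nonneg_right hm6 (pow_nonneg hp 4)
    linarith
  have hpow : v^4 ≤ 27*(s^4+x^4+p^4) := by
    have hQ : 0 ≤ s^2+x^2+p^2 := by positivity
    have h1 : v^2 ≤ 3*(s^2+x^2+p^2) := by
      rw [hv]; nlinarith [sq_nonneg (s-x), sq_nonneg (s-p), sq_nonneg (x-p)]
    have h2 : (s^2+x^2+p^2)^2 ≤ 3*(s^4+x^4+p^4) := by
      nlinarith [sq_nonneg (s^2-x^2), sq_nonneg (s^2-p^2), sq_nonneg (x^2-p^2)]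
    have h4 : v^2*v^2 ≤ (3*(s^2+x^2+p^2))*(3*(s^2+x^2+p^2)) :=
      mul_self_le_mul_self (sq_nonneg v) h1
    nlinarith
  have hsx : s*x ≤ (1+v)^2 := by
    rw [hv]
    nlinarith [mul_nonneg hs hx, mul_nonneg hs hp, mul_nonneg hx hp, sq_nonneg (s-x),
      sq_nonneg p]
  have step1 : (1/2)*(1+v)*((D*(S₀-s) - μ₁*s*x) + (μ₂*s*x - D*x - h₂*x*p)
      + (D*(P₀-p) - h₃*x*p)) ≤ (1/2)*(1+v)*(D*(S₀+P₀) + μ₂*s*x) :=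
    mul_le_mul_of_nonneg_left hF (by linarith)
  have step2 : (1/2)*(1+v)*(D*(S₀+P₀) + μ₂*s*x)
      ≤ (D*(S₀+P₀)/2)*(1+v) + (μ₂/2)*(1+v)^3 := by
    have h5 : μ₂*(s*x) ≤ μ₂*(1+v)^2 := mul_le_mul_of_nonneg_left hsx hμ₂.le
    have h6 := mul_le_mul_of_nonneg_left h5 (by linarith : (0:ℝ) ≤ (1/2)*(1+v))
    nlinarith [h6]
  have step3 : (m/216)*v^4
      ≤ (1/8)*(((σ₁+σ₄*s)*s)^2 + ((σ₂+σ₅*x)*x)^2 + ((σ₃+σ₆*p)*p)^2) := by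
    have h7 : m*v^4 ≤ m*(27*(s^4+x^4+p^4)) := mul_le_mul_of_nonneg_left hpow hmpos.le
    linarith
  have final := hkey v hv0
  rw [hgoal]
  linarith [step1, step2, step3, final]

/-- Lyapunov drift inequality for the nonlinearly perturbed flocculation model with
`Ũ(y) = (1 + s + x + p)^{1/2}`: there exist `c̃₁, c̃₂ > 0` such that
`(L Ũ)(y,k) ≤ c̃₁ − c̃₂·Ũ(y)³` on the nonnegative octant. -/
theorem nonlinear_flocculation_lyapunov
    (m₀ : ℕ) (D μ₁ μ₂ h₂ h₃ σ₁ σ₂ σ₃ σ₄ σ₅ σ₆ : Fin m₀ → ℝ) (S₀ P₀ : ℝ)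
    (hD : ∀ k, 0 < D k) (hμ₁ : ∀ k, 0 < μ₁ k) (hμ₂ : ∀ k, 0 < μ₂ k)
    (hh₂ : ∀ k, 0 < h₂ k) (hh₃ : ∀ k, 0 < h₃ k)
    (hσ₁ : ∀ k, 0 < σ₁ k) (hσ₂ : ∀ k, 0 < σ₂ k) (hσ₃ : ∀ k, 0 < σ₃ k)
    (hσ₄ : ∀ k, 0 < σ₄ k) (hσ₅ : ∀ k, 0 < σ₅ k) (hσ₆ : ∀ k, 0 < σ₆ k)
    (hS₀ : 0 < S₀) (hP₀ : 0 < P₀) :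
    ∃ c₁ c₂ : ℝ, 0 < c₁ ∧ 0 < c₂ ∧
      ∀ k : Fin m₀, ∀ s x p : ℝ, 0 ≤ s → 0 ≤ x → 0 ≤ p →
        (1 / 2) * (1 + s + x + p) ^ (-(1 : ℝ) / 2) *
            ((D k * (S₀ - s) - μ₁ k * s * x)
              + (μ₂ k * s * x - D k * x - h₂ k * x * p)
              + (D k * (P₀ - p) - h₃ k * x * p))
          - (1 / 8) * (1 + s + x + p) ^ (-(3 : ℝ) / 2) *
            (((σ₁ k + σ₄ k * s) * s) ^ 2 + ((σ₂ k + σ₅ k * x) * x) ^ 2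
              + ((σ₃ k + σ₆ k * p) * p) ^ 2)
        ≤ c₁ - c₂ * ((1 + s + x + p) ^ ((1 : ℝ) / 2)) ^ 3 := by
  have H : ∀ k : Fin m₀, ∃ c : ℝ, 0 < c ∧ ∀ s x p : ℝ, 0 ≤ s → 0 ≤ x → 0 ≤ p →
      (1/2)*(1+s+x+p)*((D k*(S₀-s) - μ₁ k*s*x) + (μ₂ k*s*x - D k*x - h₂ k*x*p)
          + (D k*(P₀-p) - h₃ k*x*p))
        - (1/8)*(((σ₁ k+σ₄ k*s)*s)^2 + ((σ₂ k+σ₅ k*x)*x)^2 + ((σ₃ k+σ₆ k*p)*p)^2)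
        + (1+s+x+p)^3 ≤ c := fun k =>
    aux_poly _ _ _ _ _ _ _ _ _ _ _ _ _ (hD k) (hμ₁ k) (hμ₂ k) (hh₂ k) (hh₃ k)
      (hσ₁ k) (hσ₂ k) (hσ₃ k) (hσ₄ k) (hσ₅ k) (hσ₆ k) hS₀ hP₀
  choose c hcpos hc using H
  refine ⟨1 + ∑ k, c k, 1, ?_, one_pos, ?_⟩
  · have : 0 ≤ ∑ k, c k := Finset.sum_nonneg fun k _ => (hcpos k).le
    linarith
  · intro k s x p hs hx hp
    have hck : c k ≤ ∑ j, c j :=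
      Finset.single_le_sum (fun j _ => (hcpos j).le) (Finset.mem_univ k)
    have hpoly := hc k s x p hs hx hp
    set FF : ℝ := (D k * (S₀ - s) - μ₁ k * s * x)
      + (μ₂ k * s * x - D k * x - h₂ k * x * p)
      + (D k * (P₀ - p) - h₃ k * x * p) with hFF
    set GG : ℝ := ((σ₁ k + σ₄ k * s) * s) ^ 2 + ((σ₂ k + σ₅ k * x) * x) ^ 2
      + ((σ₃ k + σ₆ k * p) * p) ^ 2 with hGG
    set u : ℝ := 1 + s + x + p with hu
    have hu1 : (1:ℝ) ≤ u := by rw [hu]; linarith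
    have hu0 : (0:ℝ) < u := by linarith
    set T : ℝ := u ^ ((3:ℝ)/2) with hT
    have hT0 : (0:ℝ) < T := Real.rpow_pos_of_pos hu0 _
    have hT1 : (1:ℝ) ≤ T := by
      calc (1:ℝ) = u ^ (0:ℝ) := (Real.rpow_zero u).symm
      _ ≤ u ^ ((3:ℝ)/2) := Real.rpow_le_rpow_of_exponent_le hu1 (by norm_num)
    have ht3 : (u ^ ((1:ℝ)/2)) ^ (3:ℕ) = T := by
      rw [hT, ← Real.rpow_natCast (u ^ ((1:ℝ)/2)) 3, ← Real.rpow_mul hu0.le]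
      norm_num
    have e1 : u ^ (-(1:ℝ)/2) = u / T := by
      rw [hT, eq_div_iff (ne_of_gt (Real.rpow_pos_of_pos hu0 _)),
        ← Real.rpow_add hu0]
      norm_num
    have e2 : u ^ (-(3:ℝ)/2) = 1 / T := by
      rw [hT, eq_div_iff (ne_of_gt (Real.rpow_pos_of_pos hu0 _)),
        ← Real.rpow_add hu0]
      norm_num [Real.rpow_zero]
    have hTT : T * T = u ^ (3:ℕ) := by
      rw [hT, ← Real.rpow_add hu0, ← Real.rpow_natCast u 3]
      norm_num
    rw [ht3, e1, e2]
    have hL : 1 / 2 * (u / T) * FF - 1 / 8 * (1 / T) * GG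
        = (1 / 2 * u * FF - 1 / 8 * GG) / T := by
      field_simp
    rw [hL, div_le_iff₀ hT0]
    clear_value FF GG u T
    have hcsum : (0:ℝ) ≤ ∑ j, c j := Finset.sum_nonneg fun j _ => (hcpos j).le
    nlinarith [mul_nonneg (by linarith : (0:ℝ) ≤ 1 + ∑ j, c j)
      (by linarith : (0:ℝ) ≤ T - 1), hTT, hpoly, hck]
end
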